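/- Let δ ≥ 3 be an integer, let V(q) = Σ_{h=0}^{δ} v_h·C(δ,h)·q_1^h·q_2^{δ−h} be a homogeneous real polynomial of degree δ, and let ψ ∈ ℝ. Define the rotated coefficients v′_0, …, v′_δ by V(σ(ψ)^{-1}q) = Σ_{h=0}^{δ} v′_h·C(δ,h)·q_1^h·q_2^{δ−h}. Then the 2×(δ−1) matrix M′ with first row (v′_0−v′_2, …, v′_{δ−2}−v′_δ) and second row (2v′_1, …, 2v′_{δ−1}) has the same rank as the 2×(δ−1) matrix M with first row (v_0−v_2, …, v_{δ−2}−v_δ) and second row (2v_1, …, 2v_{δ−1}). -/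

import Mathlib

open MvPolynomial Finset

noncomputable section

/-- the homogeneous polynomial `V(q) = Σ_{h=0}^{δ} v_h C(δ,h) q₁^h q₂^{δ-h}` -/
def Vhom (δ : ℕ) (v : ℕ → ℝ) : MvPolynomial (Fin 2) ℝ :=
  ∑ h ∈ Finset.range (δ + 1), C (v h * (δ.choose h : ℝ)) * X 0 ^ h * X 1 ^ (δ - h)

/-- the change of variables `q ↦ σ(ψ)⁻¹ q` applied to a polynomial in `(q₁,q₂)`,
where `σ(ψ)` is the rotation matrix `((cos ψ, -sin ψ),(sin ψ, cos ψ))` -/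
def rot2 (ψ : ℝ) (P : MvPolynomial (Fin 2) ℝ) : MvPolynomial (Fin 2) ℝ :=
  MvPolynomial.aeval
    ![C (Real.cos ψ) * X 0 + C (Real.sin ψ) * X 1,
      C (-Real.sin ψ) * X 0 + C (Real.cos ψ) * X 1] P

/-- the `2 × (δ-1)` matrix `M` whose (1-based) `a`-th column is `(v_{a-1} - v_{a+1}, 2 v_a)` -/
def Mmat (δ : ℕ) (v : ℕ → ℝ) : Matrix (Fin 2) (Fin (δ - 1)) ℝ :=
  Matrix.of fun i j => if i = 0 then v j.1 - v (j.1 + 2) else 2 * v (j.1 + 1)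

namespace St19

def Bform (m : ℕ) (w : ℕ → ℂ) : MvPolynomial (Fin 2) ℂ :=
  ∑ h ∈ Finset.range (m + 1), C (w h * (m.choose h : ℂ)) * X 0 ^ h * X 1 ^ (m - h)

def Dop : MvPolynomial (Fin 2) ℂ →ₗ[ℂ] MvPolynomial (Fin 2) ℂ :=
  (pderiv 1).toLinearMap + Complex.I • (pderiv 0).toLinearMap

lemma Dop_apply (p : MvPolynomial (Fin 2) ℂ) :
    Dop p = pderiv 1 p + Complex.I • pderiv 0 p := rfl

def rotCA (ψ : ℝ) : MvPolynomial (Fin 2) ℂ →ₐ[ℂ] MvPolynomial (Fin 2) ℂ :=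
  MvPolynomial.aeval
    ![C ((Real.cos ψ : ℂ)) * X 0 + C ((Real.sin ψ : ℂ)) * X 1,
      C ((-Real.sin ψ : ℂ)) * X 0 + C ((Real.cos ψ : ℂ)) * X 1]

lemma pderiv_rotCA (ψ : ℝ) (P : MvPolynomial (Fin 2) ℂ) :
    pderiv 0 (rotCA ψ P)
        = C ((Real.cos ψ : ℂ)) * rotCA ψ (pderiv 0 P) + C ((-Real.sin ψ : ℂ)) * rotCA ψ (pderiv 1 P)
    ∧ pderiv 1 (rotCA ψ P)
        = C ((Real.sin ψ : ℂ)) * rotCA ψ (pderiv 0 P) + C ((Real.cos ψ : ℂ)) * rotCA ψ (pderiv 1 P) := by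
  induction P using MvPolynomial.induction_on with
  | C a => simp [rotCA]
  | add p q hp hq =>
    simp only [map_add, hp.1, hp.2, hq.1, hq.2]
    constructor <;> ring
  | mul_X p n hp =>
    fin_cases n <;>
    · simp only [Fin.mk_zero, Fin.mk_one, Fin.isValue, map_mul, pderiv_mul, rotCA, aeval_X,
        Matrix.cons_val_zero, Matrix.cons_val_one, Matrix.head_cons, map_add, pderiv_C,
        pderiv_X_self, pderiv_X_of_ne (show (0:Fin 2) ≠ 1 by decide),
        pderiv_X_of_ne (show (1:Fin 2) ≠ 0 by decide), zero_mul, mul_zero, mul_one, add_zero,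
        zero_add, map_zero, map_one] at *
      rw [hp.1, hp.2]
      constructor <;> ring

lemma Dop_rotCA (ψ : ℝ) (P : MvPolynomial (Fin 2) ℂ) :
    Dop (rotCA ψ P)
      = ((Real.cos ψ : ℂ) - (Real.sin ψ : ℂ) * Complex.I) • rotCA ψ (Dop P) := by
  have hCI : (C Complex.I : MvPolynomial (Fin 2) ℂ) ^ 2 = -1 := by
    rw [← map_pow, Complex.I_sq, map_neg, map_one]
  rw [Dop_apply, (pderiv_rotCA ψ P).1, (pderiv_rotCA ψ P).2, Dop_apply, map_add, map_smul]
  simp only [smul_eq_C_mul, map_sub, map_mul, Complex.ofReal_neg, map_neg]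
  linear_combination (C ((Real.sin ψ : ℂ)) * rotCA ψ (pderiv 0 P)) * hCI

/-- map to ℂ commutes with the rotation substitution -/
lemma map_rot2 (ψ : ℝ) (P : MvPolynomial (Fin 2) ℝ) :
    map (algebraMap ℝ ℂ) (rot2 ψ P) = rotCA ψ (map (algebraMap ℝ ℂ) P) := by
  have h1 : (mapAlgHom (σ := Fin 2) (Algebra.ofId ℝ ℂ))
      ((aeval ![C (Real.cos ψ) * X 0 + C (Real.sin ψ) * X 1,
        C (-Real.sin ψ) * X 0 + C (Real.cos ψ) * X 1]) P)
      = aeval (fun i => (mapAlgHom (σ := Fin 2) (Algebra.ofId ℝ ℂ))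
          (![C (Real.cos ψ) * X 0 + C (Real.sin ψ) * X 1,
            C (-Real.sin ψ) * X 0 + C (Real.cos ψ) * X 1] i)) P :=
    comp_aeval_apply _ _ P
  have h2 : rotCA ψ (map (algebraMap ℝ ℂ) P)
      = aeval ![C ((Real.cos ψ : ℂ)) * X 0 + C ((Real.sin ψ : ℂ)) * X 1,
          C ((-Real.sin ψ : ℂ)) * X 0 + C ((Real.cos ψ : ℂ)) * X 1] P := by
    rw [rotCA]
    exact aeval_map_algebraMap ℂ _ P
  rw [rot2, h2]
  have h3 : (mapAlgHom (σ := Fin 2) (Algebra.ofId ℝ ℂ)) ((aeval ![C (Real.cos ψ) * X 0 + C (Real.sin ψ) * X 1,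
        C (-Real.sin ψ) * X 0 + C (Real.cos ψ) * X 1]) P) = map (algebraMap ℝ ℂ)
      ((aeval ![C (Real.cos ψ) * X 0 + C (Real.sin ψ) * X 1,
        C (-Real.sin ψ) * X 0 + C (Real.cos ψ) * X 1]) P) := rfl
  rw [← h3, h1]
  have h4 : (fun i => (mapAlgHom (σ := Fin 2) (Algebra.ofId ℝ ℂ))
          (![C (Real.cos ψ) * X 0 + C (Real.sin ψ) * X 1,
            C (-Real.sin ψ) * X 0 + C (Real.cos ψ) * X 1] i))
      = ![C ((Real.cos ψ : ℂ)) * X 0 + C ((Real.sin ψ : ℂ)) * X 1,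
          C ((-Real.sin ψ : ℂ)) * X 0 + C ((Real.cos ψ : ℂ)) * X 1] := by
    funext i
    fin_cases i <;> simp [mapAlgHom_apply, Algebra.ofId]
  rw [h4]

lemma map_Vhom (δ : ℕ) (v : ℕ → ℝ) :
    map (algebraMap ℝ ℂ) (Vhom δ v) = Bform δ (fun h => (v h : ℂ)) := by
  rw [Vhom, Bform]
  rw [map_sum (MvPolynomial.map (algebraMap ℝ ℂ))]
  refine Finset.sum_congr rfl fun h _ => ?_
  simp only [map_mul, map_pow, MvPolynomial.map_C, MvPolynomial.map_X,
    Complex.coe_algebraMap]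
  push_cast
  ring

lemma rot2_rot2 (ψ : ℝ) (P : MvPolynomial (Fin 2) ℝ) :
    rot2 (-ψ) (rot2 ψ P) = P := by
  rw [rot2, rot2]
  rw [comp_aeval_apply]
  have h4 : (fun i => (aeval ![C (Real.cos (-ψ)) * X 0 + C (Real.sin (-ψ)) * X 1,
        C (-Real.sin (-ψ)) * X 0 + C (Real.cos (-ψ)) * X 1])
          (![C (Real.cos ψ) * X 0 + C (Real.sin ψ) * X 1,
            C (-Real.sin ψ) * X 0 + C (Real.cos ψ) * X 1] i))
      = (X : Fin 2 → MvPolynomial (Fin 2) ℝ) := by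
    funext i
    have hcs : C (Real.cos ψ) * C (Real.cos ψ) + C (Real.sin ψ) * C (Real.sin ψ)
        = (1 : MvPolynomial (Fin 2) ℝ) := by
      rw [← map_mul, ← map_mul, ← map_add,
        show Real.cos ψ * Real.cos ψ + Real.sin ψ * Real.sin ψ = 1 by
          nlinarith [Real.sin_sq_add_cos_sq ψ], map_one]
    fin_cases i
    · simp only [Fin.mk_zero, Fin.mk_one, Fin.isValue, Matrix.cons_val_zero, Matrix.cons_val_one,
        Matrix.head_cons, map_add, map_mul, aeval_X, aeval_C, Real.cos_neg, Real.sin_neg,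
        map_neg, algebraMap_eq]
      linear_combination (X (0:Fin 2) : MvPolynomial (Fin 2) ℝ) * hcs
    · simp only [Fin.mk_zero, Fin.mk_one, Fin.isValue, Matrix.cons_val_zero, Matrix.cons_val_one,
        Matrix.head_cons, map_add, map_mul, aeval_X, aeval_C, Real.cos_neg, Real.sin_neg,
        map_neg, algebraMap_eq]
      linear_combination (X (1:Fin 2) : MvPolynomial (Fin 2) ℝ) * hcs
  rw [h4, aeval_X_left, AlgHom.id_apply]

lemma coeff_Bform (m j : ℕ) (hj : j ≤ m) (w : ℕ → ℂ) :
    coeff (Finsupp.single 0 j + Finsupp.single 1 (m - j)) (Bform m w)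
      = w j * (m.choose j : ℂ) := by
  have hmono : ∀ (h : ℕ) (a : ℂ), (C a * X 0 ^ h * X 1 ^ (m - h) : MvPolynomial (Fin 2) ℂ)
      = monomial (Finsupp.single 0 h + Finsupp.single 1 (m - h)) a := by
    intro h a
    rw [X_pow_eq_monomial, X_pow_eq_monomial, C_apply, monomial_mul, monomial_mul]
    simp
  rw [Bform]
  rw [coeff_sum]
  rw [Finset.sum_eq_single j]
  · rw [hmono, coeff_monomial, if_pos rfl]
  · intro h hh hne
    rw [hmono, coeff_monomial, if_neg]
    intro hcon
    apply hne
    have := DFunLike.congr_fun hcon (0 : Fin 2)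
    simpa [Finsupp.single_apply] using this
  · intro hj'
    exact absurd (Finset.mem_range.mpr (by omega)) hj'

lemma Dstep (m : ℕ) (hm : 1 ≤ m) (w : ℕ → ℂ) :
    Dop (Bform m w) = (m : ℂ) • Bform (m - 1) (fun h => w h + Complex.I * w (h + 1)) := by
  have key : ∀ h ∈ Finset.range (m + 1),
      Dop (C (w h * (m.choose h : ℂ)) * X 0 ^ h * X 1 ^ (m - h))
        = C (w h * (m.choose h : ℂ) * (m - h : ℕ)) * X 0 ^ h * X 1 ^ (m - 1 - h)
          + Complex.I • (C (w h * (m.choose h : ℂ) * h) * X 0 ^ (h - 1) * X 1 ^ (m - h)) := by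
    intro h hh
    rw [Dop_apply]
    rw [mul_assoc, pderiv_C_mul, pderiv_C_mul, pderiv_mul, pderiv_mul, pderiv_pow, pderiv_pow,
      pderiv_pow, pderiv_pow, pderiv_X_self, pderiv_X_self,
      pderiv_X_of_ne (by decide), pderiv_X_of_ne (by decide)]
    have : m - h - 1 = m - 1 - h := by omega
    rw [this]
    simp only [smul_eq_C_mul, ← C_eq_coe_nat, C_mul]
    ring
  have hm1 : m - 1 + 1 = m := by omega
  rw [Bform, map_sum, Finset.sum_congr rfl key, Finset.sum_add_distrib, Finset.sum_range_succ,
    Finset.sum_range_succ', Bform, hm1, Finset.smul_sum]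
  simp only [Nat.sub_self, Nat.cast_zero, mul_zero, map_zero, zero_mul, add_zero, smul_zero]
  rw [← Finset.sum_add_distrib]
  refine Finset.sum_congr rfl fun h hh => ?_
  have hhm : h < m := Finset.mem_range.mp hh
  have h2 := Nat.add_one_mul_choose_eq (m-1) h
  simp only [Nat.succ_eq_add_one, hm1] at h2
  have hn2 : (m.choose (h+1)) * (h+1) = m * ((m-1).choose h) := h2.symm
  have hn : (m.choose h) * (m - h) = m * ((m-1).choose h) := by
    rw [← Nat.choose_succ_right_eq]; exact hn2
  have hc1 : w h * (m.choose h : ℂ) * ((m - h : ℕ) : ℂ)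
      = (m : ℂ) * (w h * (((m-1).choose h : ℕ) : ℂ)) := by
    rw [mul_assoc, ← Nat.cast_mul, hn, Nat.cast_mul]; ring
  have hc2 : w (h+1) * (m.choose (h+1) : ℂ) * ((h + 1 : ℕ) : ℂ)
      = (m : ℂ) * (w (h+1) * (((m-1).choose h : ℕ) : ℂ)) := by
    rw [mul_assoc, ← Nat.cast_mul, hn2, Nat.cast_mul]; ring
  have ex2 : m - (h + 1) = m - 1 - h := by omega
  have ex3 : h + 1 - 1 = h := rfl
  rw [ex2, ex3, hc1, hc2]
  simp only [smul_eq_C_mul, map_mul, map_add]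
  push_cast
  ring


/-- the complex number encoding the `j`-th column of `Mmat` -/
def cc (v : ℕ → ℝ) (j : ℕ) : ℂ :=
  ((v j - v (j + 2) : ℝ) : ℂ) + ((2 * v (j + 1) : ℝ) : ℂ) * Complex.I

lemma coeff_rotCA_mem (ψ : ℝ) (m : ℕ) (w : ℕ → ℂ) (T : Submodule ℝ ℂ)
    (hw : ∀ k ∈ Finset.range (m + 1), w k ∈ T) (d : Fin 2 →₀ ℕ) :
    coeff d (rotCA ψ (Bform m w)) ∈ T := by
  rw [Bform, map_sum, coeff_sum]
  refine Submodule.sum_mem T fun k hk => ?_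
  have h1 : (rotCA ψ) (C (w k * (m.choose k : ℂ)) * X 0 ^ k * X 1 ^ (m - k))
      = C (w k * (m.choose k : ℂ)) * rotCA ψ (X 0 ^ k * X 1 ^ (m - k)) := by
    rw [mul_assoc, map_mul]
    congr 1
    exact AlgHom.commutes _ _
  rw [h1, coeff_C_mul]
  have h2 : rotCA ψ ((X 0 ^ k * X 1 ^ (m - k) : MvPolynomial (Fin 2) ℂ))
      = map (algebraMap ℝ ℂ) (rot2 ψ (X 0 ^ k * X 1 ^ (m - k))) := by
    rw [map_rot2]
    simp
  rw [h2, coeff_map]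
  set r : ℝ := coeff d (rot2 ψ (X 0 ^ k * X 1 ^ (m - k))) with hr
  have : w k * (m.choose k : ℂ) * (algebraMap ℝ ℂ) r
      = ((m.choose k : ℝ) * r) • w k := by
    simp only [Complex.coe_algebraMap, Complex.real_smul]
    push_cast
    ring
  rw [this]
  exact Submodule.smul_mem T _ (hw k hk)

def reLM : ℂ →ₗ[ℝ] (Fin 2 → ℝ) where
  toFun z := ![z.re, z.im]
  map_add' a b := by funext i; fin_cases i <;> simp
  map_smul' r a := by funext i; fin_cases i <;> simp

lemma reLM_inj : Function.Injective reLM := by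
  intro a b hab
  have h0 := congrFun hab 0
  have h1 := congrFun hab 1
  simp [reLM] at h0 h1
  exact Complex.ext h0 h1

lemma rank_Mmat (δ : ℕ) (v : ℕ → ℝ) :
    (Mmat δ v).rank
      = Module.finrank ℝ (Submodule.span ℝ (Set.range (fun j : Fin (δ-1) => cc v j.1))) := by
  rw [Matrix.rank_eq_finrank_span_cols]
  have ht : (Mmat δ v).col = reLM ∘ (fun j : Fin (δ-1) => cc v j.1) := by
    funext j i
    fin_cases i <;> simp [Mmat, cc, reLM, Matrix.transpose_apply, Matrix.transpose, Matrix.col]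
  rw [ht, Set.range_comp, Submodule.span_image]
  exact ((Submodule.equivMapOfInjective reLM reLM_inj _).symm.finrank_eq)

lemma Bform_congr (m : ℕ) (f g : ℕ → ℂ) (h : ∀ k, f k = g k) : Bform m f = Bform m g := by
  unfold Bform
  refine Finset.sum_congr rfl fun k _ => ?_
  rw [h k]

lemma key (δ : ℕ) (hδ : 3 ≤ δ) (v : ℕ → ℝ) (ψ : ℝ) (v' : ℕ → ℝ)
    (h : rot2 ψ (Vhom δ v) = Vhom δ v') :
    Matrix.rank (Mmat δ v') ≤ Matrix.rank (Mmat δ v) := by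
  have hδ1 : 1 ≤ δ := by omega
  have hδ2 : 1 ≤ δ - 1 := by omega
  set e : ℂ := (Real.cos ψ : ℂ) - (Real.sin ψ : ℂ) * Complex.I with he
  have hene : e ≠ 0 := by
    have he' : e = Complex.exp (-(ψ : ℂ) * Complex.I) := by
      rw [he, Complex.exp_mul_I, Complex.cos_neg, Complex.sin_neg, Complex.ofReal_cos,
        Complex.ofReal_sin]
      ring
    rw [he']
    exact Complex.exp_ne_zero _
  -- double D of a Bform
  have hBB : ∀ (w : ℕ → ℝ), Dop (Dop (Bform δ (fun k => ((w k : ℝ) : ℂ))))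
      = ((δ : ℂ) * ((δ - 1 : ℕ) : ℂ)) • Bform (δ - 2) (cc w) := by
    intro w
    have h12 : δ - 1 - 1 = δ - 2 := by omega
    rw [Dstep δ hδ1, map_smul, Dstep (δ - 1) hδ2, smul_smul, h12]
    congr 1
    refine Bform_congr _ _ _ fun k => ?_
    rw [cc]
    push_cast
    linear_combination ((w (k + 2) : ℂ)) * Complex.I_sq
  -- the rotated identity for the Bforms of degree δ
  have h1 : rotCA ψ (Bform δ (fun k => ((v k : ℝ) : ℂ))) = Bform δ (fun k => ((v' k : ℝ) : ℂ)) := by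
    rw [← map_Vhom, ← map_Vhom, ← map_rot2, h]
  -- apply Dop twice to h1
  have l1 : Dop (Dop (rotCA ψ (Bform δ (fun k => ((v k : ℝ) : ℂ)))))
      = (e * e) • rotCA ψ (Dop (Dop (Bform δ (fun k => ((v k : ℝ) : ℂ))))) := by
    rw [Dop_rotCA, map_smul, Dop_rotCA, smul_smul, ← he]
  have l2 : (e * e) • (((δ : ℂ) * ((δ - 1 : ℕ) : ℂ)) • rotCA ψ (Bform (δ - 2) (cc v)))
      = ((δ : ℂ) * ((δ - 1 : ℕ) : ℂ)) • Bform (δ - 2) (cc v') := by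
    rw [← hBB v', ← h1, l1, hBB v, map_smul]
  have hdne : ((δ : ℂ) * ((δ - 1 : ℕ) : ℂ)) ≠ 0 := by
    apply mul_ne_zero <;> · simp; omega
  have hmain : Bform (δ - 2) (cc v') = (e * e) • rotCA ψ (Bform (δ - 2) (cc v)) := by
    apply smul_right_injective (MvPolynomial (Fin 2) ℂ) hdne
    show ((δ : ℂ) * ((δ - 1 : ℕ) : ℂ)) • Bform (δ - 2) (cc v')
        = ((δ : ℂ) * ((δ - 1 : ℕ) : ℂ)) • ((e * e) • rotCA ψ (Bform (δ - 2) (cc v)))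
    rw [← l2, smul_comm]
  -- the span argument
  set T := Submodule.span ℝ (Set.range (fun j : Fin (δ - 1) => cc v j.1)) with hT
  set mulC : ℂ →ₗ[ℝ] ℂ := ((LinearMap.mul ℂ ℂ) (e * e)).restrictScalars ℝ with hmulC
  have hinjf : Function.Injective mulC := by
    intro a b hab
    simp only [hmulC, LinearMap.restrictScalars_apply, LinearMap.mul_apply_apply] at hab
    exact mul_left_cancel₀ (mul_ne_zero hene hene) hab
  have hgen : ∀ j : Fin (δ - 1), cc v' j.1 ∈ T.map mulC := by
    intro j
    have hj : (j : ℕ) ≤ δ - 2 := by omega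
    have hco := coeff_Bform (δ - 2) j.1 hj (cc v')
    rw [hmain, coeff_smul, smul_eq_mul] at hco
    have hmem : coeff (Finsupp.single 0 j.1 + Finsupp.single 1 (δ - 2 - j.1))
        (rotCA ψ (Bform (δ - 2) (cc v))) ∈ T := by
      apply coeff_rotCA_mem
      intro k hk
      have hk' : k < δ - 1 := by
        have := Finset.mem_range.mp hk; omega
      apply Submodule.subset_span
      exact ⟨⟨k, hk'⟩, rfl⟩
    have hmem2 : cc v' j.1 * (((δ - 2).choose j.1 : ℕ) : ℂ) ∈ T.map mulC := by
      rw [← hco]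
      exact ⟨_, hmem, rfl⟩
    have hchne : (((δ - 2).choose j.1 : ℕ) : ℝ) ≠ 0 := by
      simp only [ne_eq, Nat.cast_eq_zero]
      exact (Nat.choose_pos hj).ne'
    have : cc v' j.1 = ((((δ - 2).choose j.1 : ℕ) : ℝ))⁻¹ •
        (cc v' j.1 * (((δ - 2).choose j.1 : ℕ) : ℂ)) := by
      rw [Complex.real_smul]
      push_cast
      field_simp
      exact (mul_div_cancel_right₀ _ (by exact_mod_cast hchne)).symm
    rw [this]
    exact Submodule.smul_mem _ _ hmem2
  have hS : Submodule.span ℝ (Set.range (fun j : Fin (δ - 1) => cc v' j.1)) ≤ T.map mulC := by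
    rw [Submodule.span_le]
    rintro x ⟨j, rfl⟩
    exact hgen j
  rw [rank_Mmat, rank_Mmat]
  calc Module.finrank ℝ (Submodule.span ℝ (Set.range (fun j : Fin (δ - 1) => cc v' j.1)))
      ≤ Module.finrank ℝ (T.map mulC) := Submodule.finrank_mono hS
    _ = Module.finrank ℝ T := ((Submodule.equivMapOfInjective mulC hinjf T).symm.finrank_eq)

end St19

/-- The rank of the matrix `M` is invariant under rotations of
Cartesian coordinates. -/
theorem statement19 (δ : ℕ) (hδ : 3 ≤ δ) (v : ℕ → ℝ) (ψ : ℝ) (v' : ℕ → ℝ)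
    (h : rot2 ψ (Vhom δ v) = Vhom δ v') :
    Matrix.rank (Mmat δ v') = Matrix.rank (Mmat δ v) := by
  have h2 : rot2 (-ψ) (Vhom δ v') = Vhom δ v := by rw [← h, St19.rot2_rot2]
  exact le_antisymm (St19.key δ hδ v ψ v' h) (St19.key δ hδ v' (-ψ) v h2)

end
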